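/- arXiv:2204.06446 — 2 statements merged into one kernel-verified Lean document; each statement's English description precedes it below -/
import Mathlib

section
/- Let p ≥ 1, let α ≥ 0, and let λ ∈ ℝ^p satisfy λ_1 ≥ λ_2 ≥ ... ≥ λ_p ≥ 0. Then the (α,λ)-fair operator F_{α,λ} is a concave function on the open positive orthant {W ∈ ℝ^p : W_j > 0 for all j}. -/
/-! The scalar utility `φ_α` (`log` for `α = 1`, `x ^ (1 - α) / (1 - α)` otherwise) is
increasing and, for `α ≥ 0`, concave on `(0, ∞)`. As `λ` is nonincreasing, the rearrangement
inequality shows that among all pairings `∑ j, λ j * φ_α (W (σ j))` with `σ` a permutation, the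
sorted one is the smallest. Hence `F_{α,λ}` is the pointwise minimum of finitely many functions,
each concave since `λ ≥ 0`, and such a minimum is concave. -/

/-- The `(α,λ)`-fair operator on the positive orthant of `ℝ^p`:
`F (W) = (1/(1-α)) ∑ j, l j * W_(j)^(1-α)` if `α ≠ 1`, and
`F (W) = ∑ j, l j * log (W_(j))` if `α = 1`, where `W_(0) ≤ ... ≤ W_(p-1)` is the
nondecreasing rearrangement of `W` (via the sorting permutation `Tuple.sort W`). -/
noncomputable def fairOp {p : ℕ} (α : ℝ) (l : Fin p → ℝ) (W : Fin p → ℝ) : ℝ :=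
  if α = 1 then ∑ j : Fin p, l j * Real.log (W (Tuple.sort W j))
  else (1 / (1 - α)) * ∑ j : Fin p, l j * W (Tuple.sort W j) ^ (1 - α)

open Set Real

section Concavity

variable {𝕜 E β : Type*} [Semiring 𝕜] [PartialOrder 𝕜] [AddCommMonoid E] [SMul 𝕜 E]
  [AddCommMonoid β] [PartialOrder β] [IsOrderedAddMonoid β]

theorem ConcaveOn.of_forall_le_of_exists_eq [SMul 𝕜 β] [PosSMulMono 𝕜 β] {ι : Type*} {s : Set E}
    {f : E → β} {g : ι → E → β} (hs : Convex 𝕜 s) (hg : ∀ i, ConcaveOn 𝕜 s (g i))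
    (hle : ∀ i, ∀ x ∈ s, f x ≤ g i x)
    (hattained : ∀ x ∈ s, ∃ i, g i x = f x) : ConcaveOn 𝕜 s f := by
  refine ⟨hs, fun x hx y hy a b ha hb hab => ?_⟩
  obtain ⟨i, hi⟩ := hattained _ (hs hx hy ha hb hab)
  calc a • f x + b • f y ≤ a • g i x + b • g i y :=
        add_le_add (smul_le_smul_of_nonneg_left (hle i x hx) ha)
          (smul_le_smul_of_nonneg_left (hle i y hy) hb)
    _ ≤ g i (a • x + b • y) := (hg i).2 hx hy ha hb hab
    _ = f (a • x + b • y) := hi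

theorem ConcaveOn.finset_sum [Module 𝕜 β] {ι : Type*} {s : Set E} (hs : Convex 𝕜 s)
    (t : Finset ι) {g : ι → E → β} (hg : ∀ i ∈ t, ConcaveOn 𝕜 s (g i)) :
    ConcaveOn 𝕜 s fun x => ∑ i ∈ t, g i x := by
  simp_rw [← Finset.sum_apply]
  exact Finset.sum_induction _ (ConcaveOn 𝕜 s) (fun _ _ => ConcaveOn.add)
    (concaveOn_const (0 : β) hs) hg

end Concavity

/- `x ^ q = exp (log x * q)` is an increasing convex function of a convex function. -/
theorem convexOn_rpow_of_nonpos {q : ℝ} (hq : q ≤ 0) :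
    ConvexOn ℝ (Ioi 0) fun x : ℝ => x ^ q := by
  have hmul_log : ConvexOn ℝ (Ioi 0) fun x => log x * q :=
    (strictConcaveOn_log_Ioi.concaveOn.neg.smul (neg_nonneg.2 hq)).congr fun x _ => by
      simp only [Pi.neg_apply, smul_eq_mul]; ring
  have himage_convex : Convex ℝ ((fun x => log x * q) '' Ioi 0) :=
    (isPreconnected_Ioi.image _ <|
      (continuousOn_log.mono fun _ hx => (ne_of_gt hx)).mul continuousOn_const).convex
  exact ((convexOn_exp.subset (subset_univ _) himage_convex).comp hmul_log
    (exp_monotone.monotoneOn _)).congr fun x hx => (rpow_def_of_pos hx q).symm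

noncomputable def fairUtility (α x : ℝ) : ℝ :=
  if α = 1 then log x else (1 / (1 - α)) * x ^ (1 - α)

theorem fairOp_eq_sum_fairUtility {p : ℕ} (α : ℝ) (l W : Fin p → ℝ) :
    fairOp α l W = ∑ j, l j * fairUtility α (W (Tuple.sort W j)) := by
  unfold fairOp fairUtility
  split_ifs
  · rfl
  · simp only [Finset.mul_sum, mul_left_comm]

theorem concaveOn_fairUtility {α : ℝ} (hα : 0 ≤ α) :
    ConcaveOn ℝ (Ioi 0) (fairUtility α) := by
  rcases lt_trichotomy α 1 with hlt | rfl | hgt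
  · have hq : 0 ≤ 1 - α := by linarith
    refine (((concaveOn_rpow hq (by linarith)).subset Ioi_subset_Ici_self (convex_Ioi 0)).smul
      (one_div_nonneg.2 hq)).congr fun x _ => ?_
    simp [fairUtility, hlt.ne]
  · exact strictConcaveOn_log_Ioi.concaveOn.congr fun x _ => by simp [fairUtility]
  · refine ((convexOn_rpow_of_nonpos (by linarith : 1 - α ≤ 0)).smul
      (one_div_nonneg.2 (by linarith : 0 ≤ α - 1))).neg.congr fun x _ => ?_
    have : 1 - α ≠ 0 := by linarith
    simp only [fairUtility, hgt.ne', if_false, Pi.neg_apply, smul_eq_mul]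
    field_simp
    ring

theorem monotoneOn_fairUtility (α : ℝ) : MonotoneOn (fairUtility α) (Ioi 0) := by
  intro x hx y _ hxy
  unfold fairUtility
  split_ifs with h
  · exact log_le_log hx hxy
  rcases lt_or_gt_of_ne h with hlt | hgt
  · exact mul_le_mul_of_nonneg_left (rpow_le_rpow (le_of_lt hx) hxy (by linarith))
      (one_div_nonneg.2 (by linarith))
  · exact mul_le_mul_of_nonpos_left (rpow_le_rpow_of_nonpos hx hxy (by linarith))
      (one_div_nonpos.2 (by linarith))

theorem sum_mul_comp_sort_le_sum_mul_comp_perm {p : ℕ} {l W : Fin p → ℝ} {f : ℝ → ℝ}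
    {s : Set ℝ} (hl : Antitone l) (hf : MonotoneOn f s) (hW : ∀ j, W j ∈ s)
    (σ : Equiv.Perm (Fin p)) :
    ∑ j, l j * f (W (Tuple.sort W j)) ≤ ∑ j, l j * f (W (σ j)) := by
  have hmono : Monotone fun j => f (W (Tuple.sort W j)) :=
    fun i j hij => hf (hW _) (hW _) (Tuple.monotone_sort W hij)
  refine ((hl.antivary hmono).sum_mul_le_sum_mul_comp_perm
    (σ := (Tuple.sort W)⁻¹ * σ)).trans_eq ?_
  simp [Equiv.Perm.mul_apply]

theorem concaveOn_sum_mul_comp_apply {ι κ : Type*} [Fintype ι] {s : Set ℝ} {φ : ℝ → ℝ}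
    (hφ : ConcaveOn ℝ s φ) {l : ι → ℝ} (hl : ∀ i, 0 ≤ l i) (τ : ι → κ) :
    ConcaveOn ℝ {W : κ → ℝ | ∀ k, W k ∈ s} fun W => ∑ i, l i * φ (W (τ i)) := by
  have hconvex : Convex ℝ {W : κ → ℝ | ∀ k, W k ∈ s} :=
    fun W hW V hV a b ha hb hab k => hφ.1 (hW k) (hV k) ha hb hab
  refine ConcaveOn.finset_sum hconvex _ fun i _ => ConcaveOn.smul (hl i) ?_
  refine (hφ.comp_linearMap (LinearMap.proj (τ i))).subset ?_ hconvex
  exact fun W hW => hW (τ i)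

theorem fairOp_concaveOn_general {p : ℕ} (α : ℝ) (hα : 0 ≤ α)
    (l : Fin p → ℝ) (hmono : Antitone l) (hnonneg : ∀ j, 0 ≤ l j) :
    ConcaveOn ℝ {W : Fin p → ℝ | ∀ j, 0 < W j} (fairOp α l) := by
  have hperm (σ : Equiv.Perm (Fin p)) :=
    concaveOn_sum_mul_comp_apply (concaveOn_fairUtility hα) hnonneg σ
  refine ConcaveOn.of_forall_le_of_exists_eq (hperm 1).1 hperm (fun σ W hW => ?_)
    fun W _ => ⟨Tuple.sort W, (fairOp_eq_sum_fairUtility α l W).symm⟩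
  rw [fairOp_eq_sum_fairUtility]
  exact sum_mul_comp_sort_le_sum_mul_comp_perm hmono (monotoneOn_fairUtility α) hW σ

/-- for `α ≥ 0` and a nonincreasing nonnegative weight vector `l`,
the `(α,λ)`-fair operator is concave on the open positive orthant. -/
theorem fairOp_concaveOn {p : ℕ} (hp : 1 ≤ p) (α : ℝ) (hα : 0 ≤ α)
    (l : Fin p → ℝ) (hmono : Antitone l) (hnonneg : ∀ j, 0 ≤ l j) :
    ConcaveOn ℝ {W : Fin p → ℝ | ∀ j, 0 < W j} (fairOp α l) :=
  fairOp_concaveOn_general α hα l hmono hnonneg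
end

section
/- Let p ≥ 2 and define the harmonic weight vector λ ∈ ℝ^p by λ_j = (1/p)(H(p) − H(j−1)) for j = 1, ..., p, where H(k) = Σ_{ℓ=1}^k 1/ℓ is the k-th harmonic number and H(0) = 0. Then Σ_{j=1}^p λ_j = 1 and orness(λ) = 3/4. -/
/-- The orness of a weight vector `l ∈ ℝ^p`: `orness l = ∑_{j=1}^p ((p-j)/(p-1)) l_j`
(here the index `j : Fin p` is 0-based, corresponding to the 1-based index `j+1`). -/
noncomputable def orness {p : ℕ} (l : Fin p → ℝ) : ℝ :=
  ∑ j : Fin p, (((p : ℝ) - ((j : ℕ) + 1)) / ((p : ℝ) - 1)) * l j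

/-- The `k`-th harmonic number `H(k) = ∑_{ℓ=1}^k 1/ℓ`, with `H(0) = 0`. -/
noncomputable def harm (k : ℕ) : ℝ := ∑ l ∈ Finset.range k, 1 / ((l : ℝ) + 1)

/-! Since `harm n - harm j = ∑_{j ≤ k < n} 1/(k+1)`, exchanging the order of summation turns
a weighted sum `∑_j w_j (harm n - harm j)` into `∑_k (w_0 + ⋯ + w_k)/(k+1)`. For `w_j = 1` every
term is `1`; for the orness weights `w_j = n - (j+1)` the `k`-th term is `n - 1 - k/2`, and both
totals are then Gauss sums. -/

open Finset

lemma harm_succ (k : ℕ) : harm (k + 1) = harm k + 1 / ((k : ℝ) + 1) :=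
  sum_range_succ _ _

lemma sum_mul_harm_sub_harm (w : ℕ → ℝ) (n : ℕ) :
    ∑ j ∈ range n, w j * (harm n - harm j) =
      ∑ k ∈ range n, (∑ j ∈ range (k + 1), w j) / ((k : ℝ) + 1) := by
  induction n with
  | zero => simp
  | succ n ih =>
    have step (j : ℕ) : w j * (harm (n + 1) - harm j) =
        w j * (harm n - harm j) + w j / ((n : ℝ) + 1) := by
      rw [harm_succ]; ring
    rw [sum_range_succ (fun k => (∑ j ∈ range (k + 1), w j) / ((k : ℝ) + 1)), ← ih,
      sum_congr rfl fun j _ => step j, sum_add_distrib, ← sum_div,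
      sum_range_succ (fun j => w j * (harm n - harm j)), sub_self, mul_zero, add_zero]

lemma sum_range_cast_id (m : ℕ) : ∑ j ∈ range m, (j : ℝ) = m * (m - 1) / 2 := by
  induction m with
  | zero => simp
  | succ m ih => rw [sum_range_succ, ih]; push_cast; ring

lemma sum_harm_sub_harm (n : ℕ) : ∑ j ∈ range n, (harm n - harm j) = n := by
  have h := sum_mul_harm_sub_harm (fun _ => 1) n
  simp only [one_mul, sum_const, card_range, nsmul_eq_mul, mul_one] at h
  rw [h, sum_congr rfl fun k _ => by push_cast; exact div_self (by positivity)]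
  simp

lemma sum_sub_succ_mul_harm_sub_harm (n : ℕ) :
    ∑ j ∈ range n, ((n : ℝ) - (j + 1)) * (harm n - harm j) = 3 / 4 * n * (n - 1) := by
  have h (k : ℕ) :
      (∑ j ∈ range (k + 1), ((n : ℝ) - (j + 1))) / ((k : ℝ) + 1) = n - 1 - k / 2 := by
    rw [sum_sub_distrib, sum_add_distrib, sum_const, sum_const, card_range, sum_range_cast_id]
    push_cast; field_simp; ring
  rw [sum_mul_harm_sub_harm, sum_congr rfl fun k _ => h k, sum_sub_distrib, sum_const,
    card_range, ← sum_div, sum_range_cast_id, nsmul_eq_mul]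
  ring

/-- the harmonic weight vector `λ_j = (1/p)(H(p) - H(j-1))` (1-based
indexing) sums to `1` and has orness `3/4`. -/
theorem orness_harmonic {p : ℕ} (hp : 2 ≤ p) :
    (∑ j : Fin p, (1 / (p : ℝ)) * (harm p - harm (j : ℕ)) = 1) ∧
    orness (fun j : Fin p => (1 / (p : ℝ)) * (harm p - harm (j : ℕ))) = 3 / 4 := by
  have hp2 : (2 : ℝ) ≤ p := by exact_mod_cast hp
  have hp0 : (p : ℝ) ≠ 0 := by positivity
  have hp1 : (p : ℝ) - 1 ≠ 0 := by linarith
  constructor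
  · rw [← mul_sum, Fin.sum_univ_eq_sum_range (fun j => harm p - harm j), sum_harm_sub_harm]
    field_simp
  · calc orness (fun j : Fin p => (1 / (p : ℝ)) * (harm p - harm (j : ℕ)))
        = (∑ j ∈ range p, ((p : ℝ) - (j + 1)) * (harm p - harm j)) / (p * (p - 1)) := by
          rw [orness, Fin.sum_univ_eq_sum_range
            (fun j => ((p : ℝ) - (j + 1)) / (p - 1) * (1 / p * (harm p - harm j))), sum_div]
          exact sum_congr rfl fun j _ => by field_simp
      _ = 3 / 4 := by
          rw [sum_sub_succ_mul_harm_sub_harm]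
          field_simp
end
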